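/- arXiv:1810.09427 — 2 statements merged into one kernel-verified Lean document; each statement's English description precedes it below -/
import Mathlib

section
/- Let D be a digraph with at least one directed cycle and girth g, and let T be an out-branching of D rooted at r with the DFS property, of length t, with levels V_0, V_1, …, V_t. Then for each h with 0 ≤ h ≤ t − g + 2, the union of g − 1 consecutive levels V_h ∪ V_{h+1} ∪ … ∪ V_{h+g−2} induces an acyclic subdigraph of D; moreover, there is no backward arc with both endpoints in V_h ∪ V_{h+1} ∪ … ∪ V_{h+g−2}. -/
/-!
A digraph on a finite vertex type `V` is given by its arc relation `A : V → V → Prop`,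
which is irreflexive (loopless).
-/

/-- `CycleOn A U ℓ` : there is a directed cycle of length `ℓ` (a sequence of `ℓ` distinct
vertices, cyclically consecutive ones joined by arcs) all of whose vertices lie in `U`. -/
def CycleOn {V : Type*} (A : V → V → Prop) (U : Set V) (ℓ : ℕ) : Prop :=
  2 ≤ ℓ ∧ ∃ u : ZMod ℓ → V, Function.Injective u ∧ (∀ i, u i ∈ U) ∧ ∀ i, A (u i) (u (i + 1))

/-- `HasCycleLen A ℓ` : the digraph has a directed cycle of length `ℓ`. -/
def HasCycleLen {V : Type*} (A : V → V → Prop) (ℓ : ℕ) : Prop :=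
  CycleOn A Set.univ ℓ

/-- A set of vertices is acyclic if the induced subdigraph has no directed cycle. -/
def AcyclicSet {V : Type*} (A : V → V → Prop) (U : Set V) : Prop :=
  ∀ ℓ, ¬ CycleOn A U ℓ

/-- The dichromatic number: the least `k` such that the vertices can be colored with `k`
colors so that every color class is acyclic. -/
noncomputable def dichromatic {V : Type*} (A : V → V → Prop) : ℕ :=
  sInf {k | ∃ c : V → Fin k, ∀ i, AcyclicSet A {v | c v = i}}

/-- Strong connectivity: every vertex is reachable from every other by a directed path. -/
def StronglyConnected {V : Type*} (A : V → V → Prop) : Prop :=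
  ∀ u v, Relation.ReflTransGen A u v

/-- `T` is an out-branching of the digraph `A` rooted at `r`: a spanning subdigraph in which
`r` has in-degree 0, every other vertex has in-degree 1, and every vertex is reachable from
`r` (equivalently, for such in-degrees: the underlying undirected graph is a tree). -/
structure IsOutBranching {V : Type*} (A T : V → V → Prop) (r : V) : Prop where
  subdigraph : ∀ u v, T u v → A u v
  root_indeg_zero : ∀ u, ¬ T u r
  indeg_one : ∀ v, v ≠ r → ∃! u, T u v
  reach : ∀ v, Relation.ReflTransGen T r v

/-- `Descendant T anc des` : `des` is a descendant of `anc` in `T`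
(`anc` is an ancestor of `des`). -/
def Descendant {V : Type*} (T : V → V → Prop) (anc des : V) : Prop :=
  des ≠ anc ∧ Relation.ReflTransGen T anc des

/-- `(u,v)` is a backward arc of `A` with respect to `T`: it is an arc and `u` is a
descendant of `v` in `T`. -/
def BackwardArc {V : Type*} (A T : V → V → Prop) (u v : V) : Prop :=
  A u v ∧ Descendant T v u

/-- `T` has the DFS property: every directed cycle of `A` contains a backward arc. -/
def DFSProperty {V : Type*} (A T : V → V → Prop) : Prop :=
  ∀ (ℓ : ℕ) (u : ZMod ℓ → V), 2 ≤ ℓ → Function.Injective u →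
    (∀ i, A (u i) (u (i + 1))) → ∃ i, BackwardArc A T (u i) (u (i + 1))

/-- `TWalkLen T a b n` : there is a directed walk of length `n` from `a` to `b` in `T`.
For an out-branching `T` rooted at `r`, the `i`-th level is `{v | TWalkLen T r v i}`
(the walk from the root being the unique path `P_v`). -/
def TWalkLen {V : Type*} (T : V → V → Prop) (a b : V) (n : ℕ) : Prop :=
  ∃ w : Fin (n + 1) → V, w 0 = a ∧ w (Fin.last n) = b ∧
    ∀ j : Fin n, T (w j.castSucc) (w j.succ)


/-- `NWalk T a b n` : ℕ-indexed walk of length `n` from `a` to `b`. -/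
def NWalk {V : Type*} (T : V → V → Prop) (a b : V) (n : ℕ) : Prop :=
  ∃ w : ℕ → V, w 0 = a ∧ w n = b ∧ ∀ j < n, T (w j) (w (j + 1))

theorem twalk_iff_nwalk {V : Type*} {T : V → V → Prop} {a b : V} {n : ℕ} :
    TWalkLen T a b n ↔ NWalk T a b n := by
  constructor
  · rintro ⟨w, h0, hl, hs⟩
    refine ⟨fun j => w ⟨min j n, by omega⟩, ?_, ?_, ?_⟩
    · simpa [show ((0:ℕ) ⊓ n) = 0 by omega] using h0
    · simpa [Fin.last] using hl
    · intro j hj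
      have := hs ⟨j, hj⟩
      simpa [Fin.castSucc, Fin.succ, Fin.castAdd, Fin.castLE,
        show (j ⊓ n) = j by omega, show ((j+1) ⊓ n) = j+1 by omega] using this
  · rintro ⟨w, h0, hl, hs⟩
    exact ⟨fun j => w j.val, h0, hl, fun j => hs j.val j.isLt⟩

theorem nwalk_zero {V : Type*} {T : V → V → Prop} {a b : V} :
    NWalk T a b 0 ↔ a = b := by
  constructor
  · rintro ⟨w, h0, hl, _⟩; rw [← h0, ← hl]
  · rintro rfl; exact ⟨fun _ => a, rfl, rfl, by omega⟩

theorem nwalk_succ {V : Type*} {T : V → V → Prop} {a b : V} {n : ℕ} :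
    NWalk T a b (n + 1) ↔ ∃ c, NWalk T a c n ∧ T c b := by
  constructor
  · rintro ⟨w, h0, hl, hs⟩
    exact ⟨w n, ⟨w, h0, rfl, fun j hj => hs j (by omega)⟩, hl ▸ hs n (by omega)⟩
  · rintro ⟨c, ⟨w, h0, hl, hs⟩, hcb⟩
    refine ⟨fun j => if j ≤ n then w j else b, by simp [h0], by simp, ?_⟩
    intro j hj
    rcases Nat.lt_or_ge j n with hlt | hge
    · simpa [show j ≤ n by omega, show j + 1 ≤ n by omega] using hs j hlt
    · have : j = n := by omega
      subst this
      simpa [hl] using hcb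

theorem nwalk_append {V : Type*} {T : V → V → Prop} {a b c : V} {m n : ℕ}
    (h1 : NWalk T a b m) (h2 : NWalk T b c n) : NWalk T a c (m + n) := by
  induction n generalizing c with
  | zero => rw [nwalk_zero] at h2; rwa [h2] at h1
  | succ n ih =>
    obtain ⟨d, hd, hdc⟩ := nwalk_succ.mp h2
    exact nwalk_succ.mpr ⟨d, ih hd, hdc⟩

theorem nwalk_of_rtg {V : Type*} {T : V → V → Prop} {a b : V}
    (h : Relation.ReflTransGen T a b) : ∃ n, NWalk T a b n := by
  induction h with
  | refl => exact ⟨0, nwalk_zero.mpr rfl⟩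
  | tail _ hbc ih =>
    obtain ⟨n, hn⟩ := ih
    exact ⟨n + 1, nwalk_succ.mpr ⟨_, hn, hbc⟩⟩

theorem depth_unique {V : Type*} {T : V → V → Prop} {r : V}
    (hroot : ∀ u, ¬ T u r) (huniq : ∀ v, v ≠ r → ∃! u, T u v) :
    ∀ i j v, NWalk T r v i → NWalk T r v j → i = j := by
  intro i
  induction i with
  | zero =>
    intro j v hi hj
    rw [nwalk_zero] at hi
    subst hi
    cases j with
    | zero => rfl
    | succ n =>
      obtain ⟨c, _, hc⟩ := nwalk_succ.mp hj
      exact absurd hc (hroot c)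
  | succ m ih =>
    intro j v hi hj
    obtain ⟨c, hc, hcv⟩ := nwalk_succ.mp hi
    have hvr : v ≠ r := fun hvr => hroot c (hvr ▸ hcv)
    cases j with
    | zero =>
      rw [nwalk_zero] at hj
      exact absurd hj.symm hvr
    | succ n =>
      obtain ⟨c', hc', hcv'⟩ := nwalk_succ.mp hj
      obtain ⟨u, -, hu⟩ := huniq v hvr
      have : c = c' := (hu c hcv).trans (hu c' hcv').symm
      rw [ih n c hc (this ▸ hc')]

/-- Key lemma: a backward arc whose two depths differ by at most `g - 2` yields a
short cycle, contradicting that `g` is the girth. -/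
theorem backward_short {V : Type*} (A T : V → V → Prop)
    (g : ℕ) (hgmin : ∀ ℓ, HasCycleLen A ℓ → g ≤ ℓ)
    (r : V) (hsub : ∀ u v, T u v → A u v)
    (hroot : ∀ u, ¬ T u r) (huniq : ∀ v, v ≠ r → ∃! u, T u v)
    (u v : V) (hauv : A u v) (hne : u ≠ v)
    (hreach : Relation.ReflTransGen T v u)
    (iu iv : ℕ) (hwu : NWalk T r u iu) (hwv : NWalk T r v iv)
    (hk : iu ≤ iv + (g - 2)) (hg2 : 2 ≤ g) : False := by
  obtain ⟨k, hwalk⟩ := nwalk_of_rtg hreach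
  have hk1 : 1 ≤ k := by
    rcases Nat.eq_zero_or_pos k with h0 | h
    · exact absurd (nwalk_zero.mp (h0 ▸ hwalk)).symm hne
    · exact h
  obtain ⟨f, hf0, hfk, hfs⟩ := hwalk
  have hdepth : ∀ j ≤ k, NWalk T r (f j) (iv + j) :=
    fun j hj => nwalk_append hwv ⟨f, hf0, rfl, fun m hm => hfs m (by omega)⟩
  have hiu : iu = iv + k := depth_unique hroot huniq iu (iv + k) u hwu (hfk ▸ hdepth k le_rfl)
  haveI : NeZero (k + 1) := ⟨Nat.succ_ne_zero k⟩
  haveI : Fact (1 < k + 1) := ⟨by omega⟩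
  set c : ZMod (k + 1) → V := fun i => f i.val with hc
  have cinj : Function.Injective c := by
    intro i j hij
    have hi := hdepth i.val (by have := ZMod.val_lt i; omega)
    have hj := hdepth j.val (by have := ZMod.val_lt j; omega)
    have hij' : f i.val = f j.val := hij
    rw [hij'] at hi
    have : iv + i.val = iv + j.val := depth_unique hroot huniq _ _ _ hi hj
    exact ZMod.val_injective (k+1) (by omega)
  have carc : ∀ i, A (c i) (c (i + 1)) := by
    intro i
    have hval : (i + 1).val = (i.val + 1) % (k + 1) := by
      rw [ZMod.val_add, ZMod.val_one]
    rcases Nat.lt_or_ge i.val k with hlt | hge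
    · have : (i + 1).val = i.val + 1 := by rw [hval, Nat.mod_eq_of_lt (by omega)]
      rw [hc]
      simp only [this]
      exact hsub _ _ (hfs i.val hlt)
    · have hik : i.val = k := by have := ZMod.val_lt i; omega
      have : (i + 1).val = 0 := by rw [hval, hik]; simp
      rw [hc]
      simp only [this, hik, hfk, hf0]
      exact hauv
  have := hgmin (k + 1) ⟨by omega, c, cinj, fun _ => Set.mem_univ _, carc⟩
  omega

/-- Let `D` have at least one directed cycle and girth `g`, and let `T` be an
out-branching of `D` rooted at `r` with the DFS property, of length `t`, with levels
`V_i`. For each `h` with `0 ≤ h ≤ t − g + 2`, the union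
`W h = V_h ∪ V_{h+1} ∪ ⋯ ∪ V_{h+g−2}` of `g − 1` consecutive levels induces an acyclic
subdigraph of `D`; moreover no backward arc has both endpoints in `W h`. -/
theorem stmt_16 {V : Type*} [Fintype V] (A T : V → V → Prop) (hloopless : Irreflexive A)
    (g : ℕ) (hg : HasCycleLen A g) (hgmin : ∀ ℓ, HasCycleLen A ℓ → g ≤ ℓ)
    (r : V) (hT : IsOutBranching A T r) (hDFS : DFSProperty A T)
    (t : ℕ) (htne : ∃ v, TWalkLen T r v t)
    (htmax : ∀ v i, TWalkLen T r v i → i ≤ t)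
    (W : ℕ → Set V)
    (hW : ∀ h, W h = {v | ∃ i, TWalkLen T r v i ∧ h ≤ i ∧ i ≤ h + (g - 2)}) :
    ∀ h : ℕ, (h : ℤ) ≤ (t : ℤ) - (g : ℤ) + 2 →
      AcyclicSet A (W h) ∧
        ∀ u v, BackwardArc A T u v → u ∈ W h → v ∈ W h → False := by
  have hg2 : 2 ≤ g := hg.1
  intro h _
  have key : ∀ u v, BackwardArc A T u v → u ∈ W h → v ∈ W h → False := by
    rintro u v ⟨hauv, hne, hreach⟩ hu hv
    rw [hW] at hu hv
    obtain ⟨iu, hwu, hu1, hu2⟩ := hu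
    obtain ⟨iv, hwv, hv1, hv2⟩ := hv
    exact backward_short A T g hgmin r hT.subdigraph hT.root_indeg_zero hT.indeg_one
      u v hauv hne hreach iu iv (twalk_iff_nwalk.mp hwu) (twalk_iff_nwalk.mp hwv)
      (by omega) hg2
  refine ⟨?_, key⟩
  rintro ℓ ⟨hl2, u, hinj, hmem, harc⟩
  obtain ⟨i, hb⟩ := hDFS ℓ u hl2 hinj harc
  exact key _ _ hb (hmem i) (hmem (i + 1))
end

section
/- Let D be a digraph with at least one directed cycle and girth g, and let T be an out-branching of D rooted at r with the DFS property, of length t, with levels V_0, V_1, …, V_t. Let k = ⌈(t + 1)/(g − 1)⌉ and, for each h ∈ {0, 1, …, k − 1}, let U_h = ⋃_{j=0}^{g−2} V_{h(g−1)+j}, where V_m = ∅ whenever m > t. Let G be the simple graph with vertex set {0, 1, …, k − 1} in which i and j with i > j are adjacent if and only if there is a backward arc (u, v) ∈ A with u ∈ U_i and v ∈ U_j. Then χ_A(D) ≤ χ(G). -/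
section AuxWalk
variable {V : Type*} {T : V → V → Prop}

lemma twalk_refl (a : V) : TWalkLen T a a 0 :=
  ⟨fun _ => a, rfl, rfl, fun j => j.elim0⟩

lemma twalk_extend {a b c : V} {n : ℕ} (h : TWalkLen T a b n) (hbc : T b c) :
    TWalkLen T a c (n + 1) := by
  obtain ⟨w, h0, hl, hs⟩ := h
  refine ⟨Fin.snoc w c, by rw [← Fin.castSucc_zero, Fin.snoc_castSucc]; exact h0,
    Fin.snoc_last .., fun j => ?_⟩
  by_cases hj : j = Fin.last n
  · subst hj
    rw [Fin.snoc_castSucc, hl, Fin.succ_last, Fin.snoc_last]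
    exact hbc
  · have hlt : j.val < n := Fin.val_lt_last hj
    have e1 : j.succ = ((⟨j.val, hlt⟩ : Fin n).succ).castSucc := by ext; simp
    rw [Fin.snoc_castSucc, e1, Fin.snoc_castSucc]
    have := hs ⟨j.val, hlt⟩
    rwa [show ((⟨j.val, hlt⟩ : Fin n)).castSucc = j from by ext; simp] at this

lemma twalk_of_rtg {a b : V} (h : Relation.ReflTransGen T a b) :
    ∃ n, TWalkLen T a b n := by
  induction h with
  | refl => exact ⟨0, twalk_refl a⟩
  | tail _ hbc ih => obtain ⟨n, hn⟩ := ih; exact ⟨n + 1, twalk_extend hn hbc⟩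

end AuxWalk

/-- Let `D` have at least one directed cycle and girth `g`, let `T` be an out-branching
of `D` rooted at `r` with the DFS property, of length `t`, with levels `V_i`. Let
`k = ⌈(t + 1)/(g − 1)⌉`, `U h = ⋃_{j=0}^{g−2} V_{h(g−1)+j}`, and let `G` be the simple
graph on `{0, …, k−1}` in which two indices are adjacent iff a backward arc joins the
corresponding sets. Then `χ_A(D) ≤ χ(G)`. -/
theorem stmt_18 {V : Type*} [Fintype V] (A T : V → V → Prop) (hloopless : Irreflexive A)
    (g : ℕ) (hg : HasCycleLen A g) (hgmin : ∀ ℓ, HasCycleLen A ℓ → g ≤ ℓ)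
    (r : V) (hT : IsOutBranching A T r) (hDFS : DFSProperty A T)
    (t : ℕ) (htne : ∃ v, TWalkLen T r v t)
    (htmax : ∀ v i, TWalkLen T r v i → i ≤ t)
    (k : ℕ) (hk : k = ⌈((t : ℚ) + 1) / ((g : ℚ) - 1)⌉₊)
    (U : ℕ → Set V)
    (hU : ∀ h, U h = {v | ∃ i, TWalkLen T r v i ∧
      h * (g - 1) ≤ i ∧ i ≤ h * (g - 1) + (g - 2)})
    (G : SimpleGraph (Fin k))
    (hG : ∀ i j : Fin k, G.Adj i j ↔
      ∃ u v, BackwardArc A T u v ∧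
        ((u ∈ U i.1 ∧ v ∈ U j.1) ∨ (u ∈ U j.1 ∧ v ∈ U i.1))) :
    (dichromatic A : ℕ∞) ≤ G.chromaticNumber := by
  classical
  have hg2 : 2 ≤ g := hg.1
  choose lvl hlvl using fun v => twalk_of_rtg (hT.reach v)
  have hlvl_le : ∀ v, lvl v ≤ t := fun v => htmax v _ (hlvl v)
  have hlt : ∀ v, lvl v / (g - 1) < k := by
    intro v
    rw [hk, Nat.lt_ceil]
    have hgq : (0 : ℚ) < (g : ℚ) - 1 := by
      have : (2 : ℚ) ≤ (g : ℚ) := by exact_mod_cast hg2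
      linarith
    rw [lt_div_iff₀ hgq]
    have h1 : (lvl v / (g - 1)) * (g - 1) ≤ t :=
      le_trans (Nat.div_mul_le_self _ _) (hlvl_le v)
    have h2 : ((lvl v / (g - 1) : ℕ) : ℚ) * (((g - 1 : ℕ)) : ℚ) ≤ (t : ℚ) := by
      exact_mod_cast h1
    rw [Nat.cast_sub (by omega)] at h2
    push_cast at h2 ⊢
    linarith
  have hUmem : ∀ v, v ∈ U (lvl v / (g - 1)) := by
    intro v
    rw [hU]
    simp only [Set.mem_setOf_eq]
    refine ⟨lvl v, hlvl v, Nat.div_mul_le_self _ _, ?_⟩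
    have hm : lvl v % (g - 1) ≤ g - 2 := by
      have := Nat.mod_lt (lvl v) (show 0 < g - 1 by omega)
      omega
    calc lvl v = (g - 1) * (lvl v / (g - 1)) + lvl v % (g - 1) :=
          (Nat.div_add_mod _ _).symm
      _ ≤ (g - 1) * (lvl v / (g - 1)) + (g - 2) := Nat.add_le_add_left hm _
      _ = lvl v / (g - 1) * (g - 1) + (g - 2) := by rw [mul_comm]
  obtain ⟨c⟩ := G.colorable_chromaticNumber_of_fintype
  set n := G.chromaticNumber.toNat with hn
  have hdich : dichromatic A ≤ n := by
    apply Nat.sInf_le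
    refine ⟨fun v => c ⟨lvl v / (g - 1), hlt v⟩, ?_⟩
    intro col ℓ hcyc
    obtain ⟨hℓ2, u, huinj, humem, huarc⟩ := hcyc
    obtain ⟨i, hBA⟩ := hDFS ℓ u hℓ2 huinj huarc
    set x := u i with hx
    set y := u (i + 1) with hy
    have hcx : c ⟨lvl x / (g - 1), hlt x⟩ = col := humem i
    have hcy : c ⟨lvl y / (g - 1), hlt y⟩ = col := humem (i + 1)
    have hadj : G.Adj ⟨lvl x / (g - 1), hlt x⟩ ⟨lvl y / (g - 1), hlt y⟩ := by
      rw [hG]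
      exact ⟨x, y, hBA, Or.inl ⟨hUmem x, hUmem y⟩⟩
    exact c.valid hadj (hcx.trans hcy.symm)
  have hne_top : G.chromaticNumber ≠ ⊤ :=
    SimpleGraph.chromaticNumber_ne_top_iff_exists.mpr
      ⟨Fintype.card (Fin k), G.colorable_of_fintype⟩
  calc (dichromatic A : ℕ∞) ≤ (n : ℕ∞) := by exact_mod_cast hdich
    _ = G.chromaticNumber := ENat.coe_toNat hne_top
end
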